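/- arXiv:math/0403413 — 2 statements merged into one kernel-verified Lean document; each statement's English description precedes it below -/
import Mathlib

section
/- Let l be a prime, q coprime to l with multiplicative order r modulo l, and let the group G = (Z/r)^m ⋊ S_m act on R = F_l[η_1, …, η_m] as follows: the i-th generator of (Z/r)^m sends η_i to q·η_i and fixes the other variables, and S_m permutes the variables. Then the ring of invariants R^G is the polynomial ring F_l[e_1, …, e_m], where e_j is the j-th elementary symmetric polynomial in η_1^r, …, η_m^r. -/
/-!
A monomial `η^d` is fixed by the `i`-th generator of `(ℤ/r)^m` exactly when `q^(d i) = 1`, i.e.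
when `r ∣ d i`, so the `(ℤ/r)^m`-invariants are the image of the injective substitution
`expand r : η_i ↦ η_i^r`. This substitution commutes with permutations of the variables, so the
`G`-invariants are `expand r` of the symmetric polynomials, and the fundamental theorem of
symmetric polynomials identifies these with `F_l[e_1, …, e_m]`; algebraic independence of the `e_j`
is transported along the injective `expand r`.
-/

namespace MvPolynomial

section CommSemiring
variable {σ R : Type*} [CommSemiring R]

noncomputable def scaleVar [DecidableEq σ] (c : R) (i : σ) :
    MvPolynomial σ R →ₐ[R] MvPolynomial σ R :=
  aeval (Function.update X i (c • X i))

section scaleVar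
variable [DecidableEq σ] (c : R) (i : σ)

theorem scaleVar_monomial (d : σ →₀ ℕ) (a : R) :
    scaleVar c i (monomial d a) = monomial d (c ^ d i * a) := by
  have hupdate : Function.update X i (c • X i) =
      fun j : σ => C (Function.update (1 : σ → R) i c j) * X j := by
    ext1 j
    rcases eq_or_ne j i with rfl | h
    · simp [smul_eq_C_mul]
    · simp [h]
  rw [scaleVar, aeval_monomial, hupdate]
  simp only [mul_pow, Finsupp.prod_mul, ← map_pow]
  rw [← map_finsuppProd]
  have hprod : (d.prod fun j k => Function.update (1 : σ → R) i c j ^ k) = c ^ d i := by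
    rw [Finsupp.prod_eq_single i (fun j _ hj => ?_) (fun _ => ?_), Function.update_self]
    · rw [Function.update_of_ne hj, Pi.one_apply, one_pow]
    · rw [Function.update_self, pow_zero]
  rw [hprod, monomial_eq, algebraMap_eq, C_mul]
  ring

theorem coeff_scaleVar (p : MvPolynomial σ R) (d : σ →₀ ℕ) :
    coeff d (scaleVar c i p) = c ^ d i * coeff d p := by
  induction p using induction_on' with
  | monomial t a =>
    rw [scaleVar_monomial, coeff_monomial, coeff_monomial]
    split_ifs with h
    · rw [h]
    · rw [mul_zero]
  | add p q hp hq => rw [map_add, coeff_add, coeff_add, hp, hq, mul_add]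

theorem scaleVar_expand {r : ℕ} (hc : c ^ r = 1) (p : MvPolynomial σ R) :
    scaleVar c i (expand r p) = expand r p := by
  rw [← AlgHom.comp_apply]
  congr 1
  refine algHom_ext fun j => ?_
  rw [AlgHom.comp_apply, expand_X, map_pow, scaleVar, aeval_X]
  rcases eq_or_ne j i with rfl | h
  · rw [Function.update_self, smul_pow, hc, one_smul]
  · rw [Function.update_of_ne h]

theorem orderOf_dvd_of_forall_scaleVar_eq [IsDomain R] {p : MvPolynomial σ R}
    (hp : ∀ i, scaleVar c i p = p) {d : σ →₀ ℕ} (hd : d ∈ p.support) (i : σ) :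
    orderOf c ∣ d i := by
  have h := coeff_scaleVar c i p d
  rw [hp, eq_comm, mul_eq_right₀ (mem_support_iff.mp hd)] at h
  exact orderOf_dvd_of_pow_eq_one h

end scaleVar

theorem exists_expand_eq_of_forall_dvd {r : ℕ} {p : MvPolynomial σ R}
    (hp : ∀ d ∈ p.support, ∀ i, r ∣ d i) : ∃ p', expand r p' = p := by
  rw [← AlgHom.mem_range, p.as_sum]
  refine Subalgebra.sum_mem _ fun d hd =>
    (AlgHom.mem_range _).mpr ⟨monomial (d.mapRange (· / r) (Nat.zero_div r)) (coeff d p), ?_⟩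
  rw [expand_monomial]
  congr 2
  ext i
  exact Nat.mul_div_cancel' (hp d hd i)

theorem IsSymmetric.expand {p : MvPolynomial σ R} (hp : p.IsSymmetric) (r : ℕ) :
    (MvPolynomial.expand r p).IsSymmetric := fun e => by rw [rename_expand, hp e]

theorem IsSymmetric.of_expand {r : ℕ} (hr : 0 < r) {p : MvPolynomial σ R}
    (hp : (MvPolynomial.expand r p).IsSymmetric) : p.IsSymmetric :=
  fun e => expand_injective hr (by rw [← rename_expand, hp e])

theorem forall_scaleVar_eq_and_isSymmetric_iff [DecidableEq σ] [IsDomain R] {c : R}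
    (hc : 0 < orderOf c) (p : MvPolynomial σ R) :
    ((∀ i, scaleVar c i p = p) ∧ p.IsSymmetric) ↔
      ∃ p', p'.IsSymmetric ∧ expand (orderOf c) p' = p := by
  constructor
  · rintro ⟨hscale, hsymm⟩
    obtain ⟨p', rfl⟩ := exists_expand_eq_of_forall_dvd fun d hd =>
      orderOf_dvd_of_forall_scaleVar_eq c hscale hd
    exact ⟨p', hsymm.of_expand hc, rfl⟩
  · rintro ⟨p', hsymm, rfl⟩
    exact ⟨fun i => scaleVar_expand c i (pow_orderOf_eq_one c) p', hsymm.expand _⟩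

end CommSemiring

section esymm
variable {R : Type*} [CommRing R] {n : ℕ}

theorem exists_aeval_esymm_eq_iff {p : MvPolynomial (Fin n) R} :
    (∃ P : MvPolynomial (Fin n) R, aeval (fun j : Fin n => esymm (Fin n) R (j + 1)) P = p) ↔
      p.IsSymmetric := by
  constructor
  · rintro ⟨P, rfl⟩
    rw [← esymmAlgHom_apply]
    exact (esymmAlgHom _ _ _ P).2
  · intro hp
    obtain ⟨P, hP⟩ := (esymmAlgHom_fin_bijective R n).2 ⟨p, hp⟩
    exact ⟨P, by rw [← esymmAlgHom_apply, hP]⟩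

theorem aeval_esymm_injective :
    Function.Injective (aeval (R := R) fun j : Fin n => esymm (Fin n) R (j + 1)) := fun a b h =>
  (esymmAlgHom_fin_bijective R n).1 (Subtype.ext (by rw [esymmAlgHom_apply, esymmAlgHom_apply, h]))

theorem aeval_expand_esymm (r : ℕ) :
    aeval (fun j : Fin n => expand r (esymm (Fin n) R (j + 1))) =
      (expand r).comp (aeval fun j : Fin n => esymm (Fin n) R (j + 1)) :=
  (comp_aeval _ (expand r)).symm

theorem mem_adjoin_expand_esymm_iff {r : ℕ} {p : MvPolynomial (Fin n) R} :
    p ∈ Algebra.adjoin R (Set.range fun j : Fin n => expand r (esymm (Fin n) R (j + 1))) ↔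
      ∃ p', p'.IsSymmetric ∧ expand r p' = p := by
  rw [Algebra.adjoin_range_eq_range_aeval, aeval_expand_esymm, AlgHom.mem_range]
  constructor
  · rintro ⟨P, rfl⟩
    exact ⟨_, exists_aeval_esymm_eq_iff.1 ⟨P, rfl⟩, rfl⟩
  · rintro ⟨p', hp', rfl⟩
    obtain ⟨P, rfl⟩ := exists_aeval_esymm_eq_iff.2 hp'
    exact ⟨P, rfl⟩

theorem algebraicIndependent_expand_esymm {r : ℕ} (hr : 0 < r) :
    AlgebraicIndependent R fun j : Fin n => expand r (esymm (Fin n) R (j + 1)) := by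
  rw [algebraicIndependent_iff_injective_aeval, aeval_expand_esymm, AlgHom.coe_comp]
  exact (expand_injective hr).comp aeval_esymm_injective

end esymm

end MvPolynomial

open MvPolynomial

/-- the ring of invariants of the wreath-product action on
`F_l[η₁,…,η_m]` is the polynomial ring on the elementary symmetric functions of
the `η_i^r`. -/
theorem stmt_8 (l : ℕ) (hl : l.Prime) (q : ℤ) (hq : IsCoprime q (l : ℤ))
    (r : ℕ) (hr : r = orderOf (q : ZMod l)) (m : ℕ)
    (φ : Fin m → (MvPolynomial (Fin m) (ZMod l) →ₐ[ZMod l] MvPolynomial (Fin m) (ZMod l)))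
    (hφ : ∀ i, φ i = aeval (Function.update X i ((q : ZMod l) • X i)))
    (e : Fin m → MvPolynomial (Fin m) (ZMod l))
    (he : ∀ j : Fin m, e j = aeval (fun i : Fin m => X i ^ r)
      (esymm (Fin m) (ZMod l) (j + 1))) :
    (∀ p : MvPolynomial (Fin m) (ZMod l),
      ((∀ i, φ i p = p) ∧ ∀ σ : Equiv.Perm (Fin m), rename σ p = p) ↔
        p ∈ Algebra.adjoin (ZMod l) (Set.range e)) ∧
      AlgebraicIndependent (ZMod l) e := by
  have : Fact l.Prime := ⟨hl⟩
  have hr_pos : 0 < r := by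
    rw [hr, ← ZMod.coe_unitOfIsCoprime q hq, orderOf_units]
    exact orderOf_pos _
  obtain rfl : φ = scaleVar (q : ZMod l) := funext hφ
  obtain rfl : e = fun j : Fin m => expand r (esymm (Fin m) (ZMod l) (j + 1)) := funext he
  subst hr
  exact ⟨fun p => (forall_scaleVar_eq_and_isSymmetric_iff hr_pos p).trans
    mem_adjoin_expand_esymm_iff.symm, algebraicIndependent_expand_esymm hr_pos⟩
end

section
/- Let l be an odd prime, q a prime power coprime to l, r the multiplicative order of q modulo l, and write n = rm + e with 0 ≤ e < r. Then the index of the subgroup (F_{q^r}^×) ≀ S_m inside GL(n, F_q) is coprime to l, where the wreath product embeds via the direct sum of m copies of the regular representation of F_{q^r} over F_q together with an e-dimensional trivial summand. -/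
/-!
The `l`-adic valuation of `|GL(n, F_q)| = ∏_{i<n} (q^n - q^i)` is `∑_{j=1}^n v_l(q^j - 1)`.
Since `r` is the order of `q` mod `l`, only the terms with `j = rk` contribute, and by
lifting the exponent (`l` is odd) each contributes `v_l(q^r - 1) + v_l(k)`. For `n = rm + e`
with `e < r` this sums to `m · v_l(q^r - 1) + v_l(m!)`, the valuation of `|H|`.
-/

open Finset

lemma padicValNat_finsetProd {p : ℕ} (hp : p.Prime) {ι : Type*} {s : Finset ι} {f : ι → ℕ}
    (hf : ∀ i ∈ s, f i ≠ 0) :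
    padicValNat p (∏ i ∈ s, f i) = ∑ i ∈ s, padicValNat p (f i) := by
  simp only [← Nat.factorization_def _ hp, Nat.factorization_prod hf, Finsupp.finsetSum_apply]

lemma padicValNat_factorial_eq_sum {p : ℕ} (hp : p.Prime) (m : ℕ) :
    padicValNat p m.factorial = ∑ k ∈ Icc 1 m, padicValNat p k := by
  rw [← prod_Ico_id_eq_factorial]
  exact padicValNat_finsetProd hp fun k hk => by simp only [mem_Ico] at hk; omega

lemma sum_Icc_eq_sum_Icc_mul_of_not_dvd {M : Type*} [AddCommMonoid M] {r : ℕ} (hr : 0 < r)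
    {f : ℕ → M} (hf : ∀ j, ¬ r ∣ j → f j = 0) (n : ℕ) :
    ∑ j ∈ Icc 1 n, f j = ∑ k ∈ Icc 1 (n / r), f (r * k) := by
  have himage : (Icc 1 (n / r)).image (r * ·) = {j ∈ Icc 1 n | r ∣ j} := by
    ext j
    simp only [mem_image, mem_filter, mem_Icc, Nat.le_div_iff_mul_le hr]
    constructor
    · rintro ⟨k, ⟨hk1, hkn⟩, rfl⟩
      exact ⟨⟨Nat.one_le_iff_ne_zero.mpr (by positivity), by linarith⟩, dvd_mul_right r k⟩
    · rintro ⟨⟨hj1, hjn⟩, k, rfl⟩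
      exact ⟨k, ⟨Nat.pos_of_ne_zero (by rintro rfl; omega), by linarith⟩, rfl⟩
  rw [← sum_image fun a _ b _ h => Nat.eq_of_mul_eq_mul_left hr h, himage,
    sum_filter_of_ne fun j _ hj => by_contra fun hdvd => hj (hf j hdvd)]

section OrderModPrime

variable {l q : ℕ} [hl : Fact l.Prime]

lemma orderOf_natCast_pos_iff : 0 < orderOf (q : ZMod l) ↔ ¬ l ∣ q := by
  rw [← ZMod.natCast_eq_zero_iff]
  constructor
  · rintro hpos hq0
    rw [hq0, orderOf_zero] at hpos
    exact hpos.false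
  · intro hq0
    refine Nat.pos_of_dvd_of_pos (orderOf_dvd_of_pow_eq_one (ZMod.pow_card_sub_one_eq_one hq0)) ?_
    have := hl.out.two_le
    omega

lemma padicValNat_pow_sub_one_of_not_orderOf_dvd (hq : 0 < q) {j : ℕ}
    (hj : ¬ orderOf (q : ZMod l) ∣ j) : padicValNat l (q ^ j - 1) = 0 := by
  apply padicValNat.eq_zero_of_not_dvd
  rwa [← ZMod.natCast_eq_zero_iff, Nat.cast_sub (Nat.one_le_pow _ _ hq), sub_eq_zero,
    Nat.cast_pow, Nat.cast_one, ← orderOf_dvd_iff_pow_eq_one]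

lemma padicValNat_pow_orderOf_mul_sub_one (hodd : Odd l) (hq : 1 < q) (hlq : ¬ l ∣ q) {k : ℕ}
    (hk : k ≠ 0) :
    padicValNat l (q ^ (orderOf (q : ZMod l) * k) - 1) =
      padicValNat l (q ^ orderOf (q : ZMod l) - 1) + padicValNat l k := by
  set r := orderOf (q : ZMod l)
  have hr : 0 < r := orderOf_natCast_pos_iff.mpr hlq
  have hdvd : l ∣ q ^ r - 1 := by
    rw [← ZMod.natCast_eq_zero_iff, Nat.cast_sub (Nat.one_le_pow _ _ (by omega)), sub_eq_zero,
      Nat.cast_pow, Nat.cast_one, pow_orderOf_eq_one]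
  simpa [pow_mul] using padicValNat.pow_sub_pow (y := 1) hodd (Nat.one_lt_pow hr.ne' hq)
    (by simpa using hdvd) (fun h => hlq (hl.out.dvd_of_dvd_pow h)) hk

lemma sum_Icc_padicValNat_pow_sub_one (hodd : Odd l) (hq : 1 < q) (hlq : ¬ l ∣ q) (n : ℕ) :
    ∑ j ∈ Icc 1 n, padicValNat l (q ^ j - 1) =
      n / orderOf (q : ZMod l) * padicValNat l (q ^ orderOf (q : ZMod l) - 1) +
        padicValNat l (n / orderOf (q : ZMod l)).factorial := by
  rw [sum_Icc_eq_sum_Icc_mul_of_not_dvd (orderOf_natCast_pos_iff.mpr hlq)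
      (fun j => padicValNat_pow_sub_one_of_not_orderOf_dvd (by omega)),
    sum_congr rfl fun k hk => padicValNat_pow_orderOf_mul_sub_one hodd hq hlq
      (by simp only [mem_Icc] at hk; omega),
    sum_add_distrib, sum_const, Nat.card_Icc, Nat.add_sub_cancel, smul_eq_mul,
    padicValNat_factorial_eq_sum hl.out]

lemma padicValNat_card_GL {F : Type*} [Field F] [Fintype F] (hlq : ¬ l ∣ Fintype.card F)
    (n : ℕ) :
    padicValNat l (Nat.card (GL (Fin n) F)) =
      ∑ j ∈ Icc 1 n, padicValNat l (Fintype.card F ^ j - 1) := by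
  set q := Fintype.card F
  have hfactor : ∀ i < n, q ^ n - q ^ i = q ^ i * (q ^ (n - i) - 1) := fun i hi => by
    rw [Nat.mul_sub, mul_one, ← pow_add, Nat.add_sub_cancel' hi.le]
  have hsub : ∀ i < n, q ^ (n - i) - 1 ≠ 0 := fun i hi =>
    Nat.sub_ne_zero_of_lt (Nat.one_lt_pow (by omega) Fintype.one_lt_card)
  have hterm : ∀ i ∈ range n, padicValNat l (q ^ n - q ^ i) = padicValNat l (q ^ (n - i) - 1) :=
    fun i hi => by
      rw [mem_range] at hi
      rw [hfactor i hi, padicValNat.mul (by positivity) (hsub i hi), padicValNat.pow,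
        padicValNat.eq_zero_of_not_dvd hlq, mul_zero, zero_add]
  rw [Matrix.card_GL_field, Fin.prod_univ_eq_prod_range (fun i => q ^ n - q ^ i),
    padicValNat_finsetProd hl.out fun i hi => by
      rw [mem_range] at hi
      rw [hfactor i hi]
      exact mul_ne_zero (by positivity) (hsub i hi),
    sum_congr rfl hterm]
  refine sum_nbij' (n - ·) (n - ·) ?_ ?_ ?_ ?_ fun _ _ => rfl
  all_goals intro x hx; simp only [mem_range, mem_Icc] at hx ⊢; omega

end OrderModPrime

lemma Subgroup.not_dvd_index_of_padicValNat_card_eq {G : Type*} [Group G] [Finite G] {p : ℕ}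
    [Fact p.Prime] (H : Subgroup G) (h : padicValNat p (Nat.card H) = padicValNat p (Nat.card G)) :
    ¬ p ∣ H.index := by
  rw [← H.card_mul_index, padicValNat.mul Nat.card_pos.ne' H.index_ne_zero_of_finite] at h
  rw [dvd_iff_padicValNat_ne_zero H.index_ne_zero_of_finite]
  omega

theorem stmt_16_general (l : ℕ) (hl : l.Prime) (hodd : Odd l) (q : ℕ)
    (r : ℕ) (hr : r = orderOf (q : ZMod l))
    (n m e : ℕ) (hn : n = r * m + e) (he : e < r)
    (F : Type) [Field F] [Fintype F] (hF : Fintype.card F = q)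
    (H : Subgroup (GL (Fin n) F))
    (hH : Nat.card H = (q ^ r - 1) ^ m * Nat.factorial m) :
    ¬ l ∣ H.index := by
  have := Fact.mk hl
  have hq : 1 < q := hF ▸ Fintype.one_lt_card
  have hr0 : 0 < r := by omega
  have hlq : ¬ l ∣ q := orderOf_natCast_pos_iff.mp (hr ▸ hr0)
  have hm : n / r = m := by rw [hn, Nat.mul_add_div hr0, Nat.div_eq_of_lt he, add_zero]
  have hqr : q ^ r - 1 ≠ 0 := Nat.sub_ne_zero_of_lt (Nat.one_lt_pow hr0.ne' hq)
  apply H.not_dvd_index_of_padicValNat_card_eq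
  rw [padicValNat_card_GL (hF ▸ hlq), hF, sum_Icc_padicValNat_pow_sub_one hodd hq hlq, ← hr,
    hm, hH, padicValNat.mul (pow_ne_zero _ hqr) m.factorial_ne_zero, padicValNat.pow]

/-- any subgroup of `GL(n, F_q)` with the cardinality of the
wreath product `(F_{q^r}ˣ) ≀ S_m` (in particular the embedded copy described in
the paper) has index coprime to `l`. -/
theorem stmt_16 (l : ℕ) (hl : l.Prime) (hodd : Odd l) (q : ℕ) (hq : IsPrimePow q)
    (hlq : ¬ l ∣ q) (r : ℕ) (hr : r = orderOf (q : ZMod l))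
    (n m e : ℕ) (hn : n = r * m + e) (he : e < r)
    (F : Type) [Field F] [Fintype F] (hF : Fintype.card F = q)
    (H : Subgroup (GL (Fin n) F))
    (hH : Nat.card H = (q ^ r - 1) ^ m * Nat.factorial m) :
    ¬ l ∣ H.index :=
  stmt_16_general l hl hodd q r hr n m e hn he F hF H hH
end
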